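/- arXiv:1307.2527 — 2 statements merged into one kernel-verified Lean document; each statement's English description precedes it below -/
import Mathlib

section
/- Let p be a prime, let G be a finite group, and let S be a subgroup of G which is a p-group. Consider the square matrix over ℚ whose rows and columns are indexed by the G-conjugacy classes of subgroups of S, and whose (P,Q)-entry is the number |P\G/Q| of (P,Q)-double cosets in G. Then the rank of this matrix equals the number of G-conjugacy classes of cyclic subgroups of S. -/
/-- The set of double cosets `P\G/Q`, i.e. the set of orbits of the action of
`P × Q` on `G` given by `(p, q) · g = p * g * q⁻¹`. -/
def DoubleCosets {G : Type*} [Group G] (P Q : Subgroup G) : Type _ :=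
  Quot (fun x y : G => ∃ p ∈ P, ∃ q ∈ Q, p * x * q⁻¹ = y)

/-!
Burnside's lemma for the action `(p, q) • g = p * g * q⁻¹` of `P × Q` on `G` gives
`|P\G/Q| |P| |Q| = ∑_{q ∈ Q} #{g | g q g⁻¹ ∈ P}`, and the summand only depends on the conjugacy
class `C` of `⟨q⟩`: it is `#{g | g C g⁻¹ ≤ P}`. Grouping the elements of `Q` by this class factors
the double coset matrix as `A Bᵀ`, with columns indexed by the classes of cyclic subgroups:
`A P C = #{g | g C g⁻¹ ≤ P} / |P|` is the mark of `C` on `G/P`, and `B Q C` is the proportion of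
elements of `Q` generating a conjugate of `C`. On the rows of cyclic classes both factors are
triangular with respect to the orders of the subgroups, with nonzero diagonal, so both have full
rank.
-/

open Pointwise MulAction
open scoped Matrix

namespace Matrix

variable {m n c K : Type*} [Field K] [Fintype c] [DecidableEq c]

theorem det_ne_zero_of_lt_of_ne_zero {α : Type*} [LinearOrder α] (M : Matrix c c K) (r : c → α)
    (hM : ∀ a b, a ≠ b → M a b ≠ 0 → r b < r a) (hd : ∀ a, M a a ≠ 0) : M.det ≠ 0 := by
  let e := Fintype.equivFin c
  -- ordering `c` lexicographically by `(r, e)` makes `M` lower triangular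
  let : LinearOrder c := LinearOrder.lift' (fun a => toLex (r a, e a))
    fun a b h => e.injective (congrArg (fun x => (ofLex x).2) h)
  rw [det_of_isLowerTriangular M fun a b hab => ?_]
  · exact Finset.prod_ne_zero_iff.2 fun a _ => hd a
  · by_contra hne
    have hrb : r b < r a := hM a b (ne_of_lt hab) hne
    exact lt_asymm hab (Prod.Lex.toLex_lt_toLex.2 (Or.inl hrb))

theorem rank_mul_transpose_eq_card_of_det_submatrix_ne_zero [Fintype n] (A : Matrix m c K)
    (B : Matrix n c K) (e₁ : c → m) (e₂ : c → n) (hA : (A.submatrix e₁ id).det ≠ 0)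
    (hB : (B.submatrix e₂ id).det ≠ 0) : (A * Bᵀ).rank = Fintype.card c := by
  refine le_antisymm ((rank_mul_le_left _ _).trans (rank_le_card_width A)) ?_
  have hunit : IsUnit (A.submatrix e₁ id * (B.submatrix e₂ id)ᵀ) := by
    rw [isUnit_iff_isUnit_det, det_mul, det_transpose]
    exact (mul_ne_zero hA hB).isUnit
  calc Fintype.card c = (A.submatrix e₁ id * (B.submatrix e₂ id)ᵀ).rank :=
        (rank_of_isUnit _ hunit).symm
    _ = ((A * Bᵀ).submatrix e₁ e₂).rank := by
        rw [submatrix_mul _ _ _ id _ Function.bijective_id, transpose_submatrix]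
    _ ≤ (A * Bᵀ).rank := rank_submatrix_le _ _ _

end Matrix

namespace DoubleCosets

variable {G : Type*} [Group G]

abbrev prodAction (P Q : Subgroup G) : MulAction (P × Q) G where
  smul x g := x.1 * g * (x.2 : G)⁻¹
  one_smul g := show 1 * g * 1⁻¹ = g by group
  mul_smul x y g :=
    show (x.1 * y.1 : G) * g * (x.2 * y.2 : G)⁻¹ = x.1 * (y.1 * g * (y.2 : G)⁻¹) * (x.2 : G)⁻¹ by
      group

attribute [local instance] prodAction

variable {P Q : Subgroup G}

lemma smul_eq_self_iff {x : P × Q} {g : G} : x • g = g ↔ g * x.2 * g⁻¹ = x.1 := by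
  change (x.1 : G) * g * (x.2 : G)⁻¹ = g ↔ _
  rw [mul_inv_eq_iff_eq_mul, ← eq_mul_inv_iff_mul_eq, eq_comm]

lemma card_eq_card_orbitRel_quotient :
    Nat.card (DoubleCosets P Q) = Nat.card (orbitRel.Quotient (P × Q) G) :=
  Nat.card_congr <| Quot.congrRight fun x y => by
    rw [orbitRel_apply, mem_orbit_symm]
    constructor
    · rintro ⟨p, hp, q, hq, rfl⟩
      exact ⟨(⟨p, hp⟩, ⟨q, hq⟩), rfl⟩
    · rintro ⟨x, rfl⟩
      exact ⟨x.1, x.1.2, x.2, x.2.2, rfl⟩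

def sigmaFixedByEquiv (P Q : Subgroup G) :
    (Σ x : P × Q, fixedBy G x) ≃ Σ q : Q, {g : G // g * q * g⁻¹ ∈ P} where
  toFun x := ⟨x.1.2, x.2, (smul_eq_self_iff.1 x.2.2) ▸ x.1.1.2⟩
  invFun y := ⟨(⟨_, y.2.2⟩, y.1), y.2, smul_eq_self_iff.2 rfl⟩
  left_inv x := Sigma.subtype_ext (Prod.ext (Subtype.ext (smul_eq_self_iff.1 x.2.2)) rfl) rfl
  right_inv _ := rfl

theorem card_mul_card_mul_card [Finite G] (P Q : Subgroup G) [Fintype Q] :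
    Nat.card (DoubleCosets P Q) * (Nat.card P * Nat.card Q) =
      ∑ q : Q, Nat.card {g : G // g * q * g⁻¹ ∈ P} := by
  rw [card_eq_card_orbitRel_quotient, ← Nat.card_prod, ← Nat.card_prod,
    ← Nat.card_congr (sigmaFixedByEquivOrbitsProdGroup (P × Q) G),
    Nat.card_congr (sigmaFixedByEquiv P Q), Nat.card_sigma]

end DoubleCosets

section Conjugation

variable {G : Type*} [Group G]

lemma exists_map_conj_eq_iff_mem_orbit {P Q : Subgroup G} :
    (∃ g : G, P.map (MulAut.conj g).toMonoidHom = Q) ↔ Q ∈ orbit (ConjAct G) P :=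
  Iff.rfl

lemma ConjAct.smul_zpowers (c : ConjAct G) (q : G) :
    c • Subgroup.zpowers q = Subgroup.zpowers (c • q) :=
  MonoidHom.map_zpowers _ _

lemma card_conj_mem_eq_card_smul_zpowers_le (q : G) (P : Subgroup G) :
    Nat.card {g : G // g * q * g⁻¹ ∈ P} =
      Nat.card {c : ConjAct G // c • Subgroup.zpowers q ≤ P} :=
  Nat.card_congr <| ConjAct.toConjAct.toEquiv.subtypeEquiv fun g => by
    simp [ConjAct.smul_zpowers, ConjAct.toConjAct_smul]

lemma card_smul_le_eq_of_mem_orbit {H K : Subgroup G} (h : K ∈ orbit (ConjAct G) H)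
    (P : Subgroup G) :
    Nat.card {c : ConjAct G // c • K ≤ P} = Nat.card {c : ConjAct G // c • H ≤ P} := by
  obtain ⟨d, rfl⟩ := h
  exact Nat.card_congr <| (Equiv.mulRight d).subtypeEquiv fun c => by simp [mul_smul]

lemma card_smul_subgroup (c : ConjAct G) (H : Subgroup G) : Nat.card ↥(c • H) = Nat.card H :=
  Nat.card_congr (Subgroup.equivSMul c H).toEquiv.symm

lemma isCyclic_of_mem_orbit {H K : Subgroup G} (h : K ∈ orbit (ConjAct G) H) [IsCyclic H] :
    IsCyclic K := by
  obtain ⟨c, rfl⟩ := h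
  exact (Subgroup.equivSMul c H).isCyclic.1 inferInstance

end Conjugation

structure IsConjClassReps {G ι : Type*} [Group G] (S : Subgroup G) (f : ι → Subgroup G) :
    Prop where
  le : ∀ i, f i ≤ S
  existsUnique_mem_orbit : ∀ P ≤ S, ∃! i, f i ∈ orbit (ConjAct G) P

namespace IsConjClassReps

variable {G ι : Type*} [Group G] {S : Subgroup G} {f : ι → Subgroup G}
  (hf : IsConjClassReps S f)

noncomputable def classIdx (P : Subgroup G) (hP : P ≤ S) : ι :=
  (hf.existsUnique_mem_orbit P hP).exists.choose

lemma classIdx_eq_iff {P : Subgroup G} {hP : P ≤ S} {i : ι} :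
    hf.classIdx P hP = i ↔ f i ∈ orbit (ConjAct G) P :=
  ⟨fun h => h ▸ (hf.existsUnique_mem_orbit P hP).exists.choose_spec,
    fun h => (hf.existsUnique_mem_orbit P hP).unique
      (hf.existsUnique_mem_orbit P hP).exists.choose_spec h⟩

lemma mem_orbit_classIdx (P : Subgroup G) (hP : P ≤ S) :
    f (hf.classIdx P hP) ∈ orbit (ConjAct G) P :=
  hf.classIdx_eq_iff.1 rfl

lemma classIdx_eq_classIdx_iff {P Q : Subgroup G} (hP : P ≤ S) (hQ : Q ≤ S) :
    hf.classIdx P hP = hf.classIdx Q hQ ↔ Q ∈ orbit (ConjAct G) P := by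
  rw [hf.classIdx_eq_iff, mem_orbit_symm, orbit_eq_iff.2 (hf.mem_orbit_classIdx Q hQ),
    mem_orbit_symm]

lemma classIdx_self (i : ι) : hf.classIdx (f i) (hf.le i) = i :=
  hf.classIdx_eq_iff.2 (mem_orbit_self _)

include hf in
lemma eq_of_mem_orbit {i j : ι} (h : f i ∈ orbit (ConjAct G) (f j)) : i = j :=
  calc i = hf.classIdx (f i) (hf.le i) := (hf.classIdx_self i).symm
    _ = hf.classIdx (f j) (hf.le j) := ((hf.classIdx_eq_classIdx_iff _ _).2 h).symm
    _ = j := hf.classIdx_self j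

include hf in
lemma card_lt_of_smul_le [Finite G] {i j : ι} (hij : i ≠ j) {c : ConjAct G}
    (h : c • f j ≤ f i) : Nat.card (f j) < Nat.card (f i) := by
  refine (card_smul_subgroup c (f j) ▸ Subgroup.card_le_of_le h).lt_of_ne fun hcard => hij ?_
  refine hf.eq_of_mem_orbit ⟨c, Subgroup.eq_of_le_of_card_ge h ?_⟩
  rw [card_smul_subgroup, hcard]

noncomputable def cyclicClassIdx (P : Subgroup G) (hP : P ≤ S) [IsCyclic P] :
    {i // IsCyclic (f i)} :=
  ⟨hf.classIdx P hP, isCyclic_of_mem_orbit (hf.mem_orbit_classIdx P hP)⟩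

noncomputable def cyclicClassesEquiv :
    Quot (fun P Q : {P : Subgroup G // P ≤ S ∧ IsCyclic P} =>
      (Q : Subgroup G) ∈ orbit (ConjAct G) P.1) ≃ {i // IsCyclic (f i)} := by
  refine Equiv.ofBijective (Quot.lift (fun P => haveI := P.2.2; hf.cyclicClassIdx P.1 P.2.1)
    fun P Q h => Subtype.ext ((hf.classIdx_eq_classIdx_iff P.2.1 Q.2.1).2 h)) ⟨?_, fun i => ?_⟩
  · rintro ⟨P⟩ ⟨Q⟩ h
    exact Quot.sound ((hf.classIdx_eq_classIdx_iff P.2.1 Q.2.1).1 (congrArg Subtype.val h))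
  · exact ⟨Quot.mk _ ⟨f i, hf.le i, i.2⟩, Subtype.ext (hf.classIdx_self i)⟩

end IsConjClassReps

noncomputable def markMatrix {G ι κ : Type*} [Group G] (f : ι → Subgroup G)
    (g : κ → Subgroup G) : Matrix ι κ ℚ :=
  Matrix.of fun i k => (Nat.card {c : ConjAct G // c • g k ≤ f i} : ℚ) / Nat.card (f i)

lemma nonempty_of_natCard_div_ne_zero {α : Type*} {n : ℚ} (h : (Nat.card α : ℚ) / n ≠ 0) :
    Nonempty α :=
  (Nat.card_ne_zero.1 (Nat.cast_ne_zero.1 (div_ne_zero_iff.1 h).1)).1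

namespace IsConjClassReps

variable {G ι : Type*} [Group G] {S : Subgroup G} {f : ι → Subgroup G}
  (hf : IsConjClassReps S f)

noncomputable def cyclicClass (q : G) (hq : q ∈ S) : {i // IsCyclic (f i)} :=
  hf.cyclicClassIdx (Subgroup.zpowers q) (Subgroup.zpowers_le.2 hq)

lemma cyclicClass_eq_iff {q : G} {hq : q ∈ S} {k : {i // IsCyclic (f i)}} :
    hf.cyclicClass q hq = k ↔ f k ∈ orbit (ConjAct G) (Subgroup.zpowers q) :=
  Subtype.ext_iff.trans (hf.classIdx_eq_iff (hP := Subgroup.zpowers_le.2 hq))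

open scoped Classical

variable [Fintype G] [Fintype ι]

noncomputable def cyclicClassMatrix : Matrix ι {k // IsCyclic (f k)} ℚ :=
  Matrix.of fun j k =>
    (Nat.card {q : f j // hf.cyclicClass q (hf.le j q.2) = k} : ℚ) / Nat.card (f j)

theorem card_doubleCosets_mul_card_mul_card_eq_sum (i j : ι) :
    Nat.card (DoubleCosets (f i) (f j)) * (Nat.card (f i) * Nat.card (f j)) =
      ∑ k : {k // IsCyclic (f k)}, Nat.card {c : ConjAct G // c • f k ≤ f i} *
        Nat.card {q : f j // hf.cyclicClass q (hf.le j q.2) = k} := by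
  rw [DoubleCosets.card_mul_card_mul_card,
    ← Fintype.sum_fiberwise fun q : f j => hf.cyclicClass q (hf.le j q.2)]
  refine Fintype.sum_congr _ _ fun k => ?_
  have hq : ∀ q : {q : f j // hf.cyclicClass q (hf.le j q.2) = k},
      Nat.card {g : G // g * q * g⁻¹ ∈ f i} = Nat.card {c : ConjAct G // c • f k ≤ f i} := by
    rintro ⟨q, hq⟩
    rw [card_conj_mem_eq_card_smul_zpowers_le,
      card_smul_le_eq_of_mem_orbit (hf.cyclicClass_eq_iff.1 hq)]
  rw [Fintype.sum_congr _ _ hq, Finset.sum_const, Finset.card_univ, ← Nat.card_eq_fintype_card,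
    smul_eq_mul, mul_comm]

theorem doubleCosetMatrix_eq_mul :
    Matrix.of (fun i j : ι => (Nat.card (DoubleCosets (f i) (f j)) : ℚ)) =
      markMatrix f (fun k : {k // IsCyclic (f k)} => f k) * hf.cyclicClassMatrixᵀ := by
  ext i j
  have hcard : ∀ i, (Nat.card (f i) : ℚ) ≠ 0 := fun i => Nat.cast_ne_zero.2 Nat.card_pos.ne'
  simp only [Matrix.of_apply, Matrix.mul_apply, Matrix.transpose_apply, markMatrix,
    cyclicClassMatrix, div_mul_div_comm, ← Finset.sum_div]
  rw [eq_div_iff (mul_ne_zero (hcard i) (hcard j))]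
  exact_mod_cast hf.card_doubleCosets_mul_card_mul_card_eq_sum i j

include hf in
theorem det_markMatrix_ne_zero :
    ((markMatrix f (fun k : {k // IsCyclic (f k)} => f k)).submatrix Subtype.val id).det ≠ 0 := by
  refine Matrix.det_ne_zero_of_lt_of_ne_zero _ (fun k => Nat.card (f k)) (fun a b hab h => ?_)
    fun a => div_ne_zero (Nat.cast_ne_zero.2 ?_) (Nat.cast_ne_zero.2 Nat.card_pos.ne')
  · obtain ⟨c, hc⟩ := nonempty_of_natCard_div_ne_zero h
    exact hf.card_lt_of_smul_le (Subtype.coe_ne_coe.2 hab) hc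
  · exact Nat.card_ne_zero.2 ⟨⟨⟨1, (one_smul _ _).le⟩⟩, inferInstance⟩

theorem det_cyclicClassMatrix_ne_zero :
    (hf.cyclicClassMatrix.submatrix Subtype.val id).det ≠ 0 := by
  refine Matrix.det_ne_zero_of_lt_of_ne_zero _ (fun k => Nat.card (f k)) (fun a b hab h => ?_)
    fun a => div_ne_zero (Nat.cast_ne_zero.2 ?_) (Nat.cast_ne_zero.2 Nat.card_pos.ne')
  · obtain ⟨⟨q, hqb⟩⟩ := nonempty_of_natCard_div_ne_zero h
    obtain ⟨c, hc⟩ := mem_orbit_symm.1 (hf.cyclicClass_eq_iff.1 hqb)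
    exact hf.card_lt_of_smul_le (Subtype.coe_ne_coe.2 hab)
      (hc ▸ Subgroup.zpowers_le.2 q.2)
  · obtain ⟨q, hq⟩ := (Subgroup.isCyclic_iff_exists_zpowers_eq_top _).1 a.2
    have hqa : hf.cyclicClass q (hf.le a (hq ▸ Subgroup.mem_zpowers q)) = a :=
      hf.cyclicClass_eq_iff.2 (hq ▸ mem_orbit_self _)
    exact Nat.card_ne_zero.2 ⟨⟨⟨⟨q, hq ▸ Subgroup.mem_zpowers q⟩, hqa⟩⟩, inferInstance⟩

end IsConjClassReps

theorem rank_doubleCoset_matrix_eq_card_cyclic_classes_pSubgroup_general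
    {G : Type*} [Group G] [Fintype G]
    (S : Subgroup G)
    {ι : Type} [Fintype ι] (f : ι → Subgroup G)
    (hle : ∀ i, f i ≤ S)
    (hrep : ∀ P : Subgroup G, P ≤ S →
      ∃! i, ∃ g : G, Subgroup.map (MulAut.conj g).toMonoidHom P = f i) :
    (Matrix.of fun i j : ι => (Nat.card (DoubleCosets (f i) (f j)) : ℚ)).rank
      = Nat.card (Quot (fun P Q : {P : Subgroup G // P ≤ S ∧ IsCyclic ↥P} =>
          ∃ g : G, Subgroup.map (MulAut.conj g).toMonoidHom (P : Subgroup G)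
            = (Q : Subgroup G))) := by
  classical
  have hf : IsConjClassReps S f := ⟨hle, hrep⟩
  rw [hf.doubleCosetMatrix_eq_mul, Matrix.rank_mul_transpose_eq_card_of_det_submatrix_ne_zero _ _
    _ _ hf.det_markMatrix_ne_zero hf.det_cyclicClassMatrix_ne_zero, ← Nat.card_eq_fintype_card]
  exact Nat.card_congr <| hf.cyclicClassesEquiv.symm.trans <|
    Quot.congrRight fun _ _ => exists_map_conj_eq_iff_mem_orbit.symm

/-- **Counting conjugacy classes of cyclic subgroups, fusion system version via a
realizing group.**  Let `p` be a prime, `G` a finite group and `S ≤ G` a `p`-subgroup.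
Let `f i`, for `i` in a finite index type `ι`, be a system of representatives of the
`G`-conjugacy classes of subgroups of `S`.  Then the rank of the matrix
`(|P\G/Q|)_{P,Q ≤_G S}` over `ℚ` equals the number of `G`-conjugacy classes of cyclic
subgroups of `S`. -/
theorem rank_doubleCoset_matrix_eq_card_cyclic_classes_pSubgroup
    {p : ℕ} (hp : p.Prime) {G : Type*} [Group G] [Fintype G]
    (S : Subgroup G) (hS : IsPGroup p ↥S)
    {ι : Type} [Fintype ι] [DecidableEq ι] (f : ι → Subgroup G)
    (hle : ∀ i, f i ≤ S)
    (hrep : ∀ P : Subgroup G, P ≤ S →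
      ∃! i, ∃ g : G, Subgroup.map (MulAut.conj g).toMonoidHom P = f i) :
    (Matrix.of fun i j : ι => (Nat.card (DoubleCosets (f i) (f j)) : ℚ)).rank
      = Nat.card (Quot (fun P Q : {P : Subgroup G // P ≤ S ∧ IsCyclic ↥P} =>
          ∃ g : G, Subgroup.map (MulAut.conj g).toMonoidHom (P : Subgroup G)
            = (Q : Subgroup G))) :=
  rank_doubleCoset_matrix_eq_card_cyclic_classes_pSubgroup_general S f hle hrep
end

section
/- Let G be a finite group and S a subgroup of G. Let Ω be a finite (S,S)-biset, regarded as a left (S×S)-set via (s,t)·x = s·x·t⁻¹, satisfying: (i) every point stabilizer of Ω in S×S is of the form Δ(P, c_g) = {(u, g u g⁻¹) : u ∈ P} for some subgroup P ≤ S and some g ∈ G with g P g⁻¹ ≤ S; (ii) for every subgroup P ≤ S and every g ∈ G with g P g⁻¹ ≤ S, the left P-set obtained by restricting the left S-action of Ω along the inclusion P ↪ S is isomorphic to the left P-set obtained by restricting along u ↦ g u g⁻¹, and the analogous condition holds for the right S-action; (iii) Ω contains a sub-(S,S)-biset isomorphic to S with left and right actions given by multiplication. Then the square matrix over ℚ whose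 rows and columns are indexed by the G-conjugacy classes of subgroups of S and whose (Q,P)-entry is the number of Q-fixed points of the left S-set Ω/P of right P-orbits of Ω, is nonsingular. -/
/-- An `(S,S)`-biset structure on a type `Ω`: a left `S`-action and a right
`S`-action which commute with each other. -/
structure Biset (S : Type*) [Group S] (Ω : Type*) where
  /-- the left action -/
  smul : S → Ω → Ω
  /-- the right action -/
  rmul : Ω → S → Ω
  one_smul : ∀ x, smul 1 x = x
  mul_smul : ∀ s t x, smul (s * t) x = smul s (smul t x)
  rmul_one : ∀ x, rmul x 1 = x
  rmul_mul : ∀ x s t, rmul x (s * t) = rmul (rmul x s) t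
  smul_rmul : ∀ s x t, rmul (smul s x) t = smul s (rmul x t)

section Defs

variable {G : Type*} [Group G] {S : Subgroup G} {Ω : Type*}

/-- `Ω/P`: the set of right `P`-orbits of the biset `Ω`, for a subgroup `P ≤ S`. -/
def Biset.rOrb (B : Biset (↥S) Ω) (P : Subgroup G) : Type _ :=
  Quot (fun x y : Ω => ∃ u : ↥S, (u : G) ∈ P ∧ B.rmul x u = y)

/-- The left `S`-action on `Ω/P`, given by `s · (xP) = (s·x)P`. -/
def Biset.rOrbSmul (B : Biset (↥S) Ω) (P : Subgroup G) (s : ↥S) :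
    B.rOrb P → B.rOrb P :=
  Quot.map (B.smul s) (by
    rintro x y ⟨u, hu, rfl⟩
    exact ⟨u, hu, B.smul_rmul s x u⟩)

/-- The set of `Q`-fixed points of the left `S`-set `Ω/P`. -/
def Biset.fixedPts (B : Biset (↥S) Ω) (P Q : Subgroup G) : Type _ :=
  {c : B.rOrb P // ∀ u : ↥S, (u : G) ∈ Q → B.rOrbSmul P u c = c}

/-- `P\Ω/Q`: the set of orbits of the action of `P × Q` on `Ω` given by
`(p, q) · x = p · x · q⁻¹`. -/
def Biset.dOrb (B : Biset (↥S) Ω) (P Q : Subgroup G) : Type _ :=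
  Quot (fun x y : Ω => ∃ u v : ↥S, (u : G) ∈ P ∧ (v : G) ∈ Q ∧
    B.smul u (B.rmul x v⁻¹) = y)

/-- Condition (i): every point stabilizer of `Ω` in `S × S` (for the action
`(s,t) · x = s·x·t⁻¹`) is a "twisted diagonal" subgroup `Δ(P, c_g)` for some
subgroup `P ≤ S` and some `g ∈ G` with `gPg⁻¹ ≤ S`.  This is the group-realized
form of the biset being `F`-generated. -/
def Biset.FusionGenerated (B : Biset (↥S) Ω) : Prop :=
  ∀ x : Ω, ∃ (P : Subgroup G) (g : G), P ≤ S ∧ (∀ u ∈ P, g * u * g⁻¹ ∈ S) ∧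
    ∀ u v : ↥S, B.smul u (B.rmul x v⁻¹) = x ↔ ((u : G) ∈ P ∧ (v : G) = g * u * g⁻¹)

/-- Condition (ii), left half: for every subgroup `P ≤ S` and every `g ∈ G` with
`gPg⁻¹ ≤ S`, the left `P`-set obtained from `Ω` by restricting the left `S`-action
along the inclusion `P ↪ S` is isomorphic to the one obtained by restricting along
`u ↦ gug⁻¹`.  This is the group-realized form of `F`-stability on the left. -/
def Biset.LeftStable (B : Biset (↥S) Ω) : Prop :=
  ∀ (P : Subgroup G) (g : G), P ≤ S → (∀ u ∈ P, g * u * g⁻¹ ∈ S) →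
    ∃ e : Ω ≃ Ω, ∀ (u : G), u ∈ P → ∀ (huS : u ∈ S) (hgu : g * u * g⁻¹ ∈ S) (x : Ω),
      e (B.smul ⟨u, huS⟩ x) = B.smul ⟨g * u * g⁻¹, hgu⟩ (e x)

/-- Condition (ii), right half: `F`-stability of the right `S`-action. -/
def Biset.RightStable (B : Biset (↥S) Ω) : Prop :=
  ∀ (P : Subgroup G) (g : G), P ≤ S → (∀ u ∈ P, g * u * g⁻¹ ∈ S) →
    ∃ e : Ω ≃ Ω, ∀ (u : G), u ∈ P → ∀ (huS : u ∈ S) (hgu : g * u * g⁻¹ ∈ S) (x : Ω),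
      e (B.rmul x ⟨u, huS⟩) = B.rmul (e x) ⟨g * u * g⁻¹, hgu⟩

/-- Condition (iii): `Ω` contains a sub-`(S,S)`-biset isomorphic to `S` with left
and right actions given by multiplication. -/
def Biset.ContainsGroup (B : Biset (↥S) Ω) : Prop :=
  ∃ f : ↥S → Ω, Function.Injective f ∧
    ∀ s x t : ↥S, f (s * x * t) = B.smul s (B.rmul (f x) t)

end Defs

/-! A `Q`-fixed point of `Ω/P` forces `Q` to be `G`-subconjugate to `P`, because the point
stabilizers of `Ω` are twisted diagonals; and `Ω/P` always has `P`-fixed points, because `Ω`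
contains `S`. Ordering the classes by the order of their subgroups, the matrix is therefore
triangular with nonzero diagonal. -/

theorem Matrix.det_ne_zero_of_lt_of_ne_zero_s7 {n α R : Type*} [Fintype n] [DecidableEq n]
    [LinearOrder α] [CommRing R] [IsDomain R] (M : Matrix n n R) (w : n → α)
    (hoff : ∀ i j, i ≠ j → M i j ≠ 0 → w i < w j) (hdiag : ∀ i, M i i ≠ 0) :
    M.det ≠ 0 := by
  have htri : M.BlockTriangular w := fun i j hji => by
    by_contra hij
    exact (hoff i j (fun h => (h ▸ hji).false) hij).asymm hji
  have hblock (a : α) :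
      M.toSquareBlock w a = Matrix.diagonal fun i : {i // w i = a} => M i i := by
    ext i j
    by_cases hij : i = j
    · subst hij; simp [Matrix.toSquareBlock_def]
    · rw [Matrix.diagonal_apply_ne _ hij, Matrix.toSquareBlock_def]
      by_contra hM
      exact (hoff i j (fun h => hij (Subtype.ext h)) hM).ne (i.2.trans j.2.symm)
  rw [htri.det, Finset.prod_ne_zero_iff]
  intro a _
  rw [hblock, Matrix.det_diagonal, Finset.prod_ne_zero_iff]
  exact fun i _ => hdiag i

namespace Biset

variable {G : Type*} [Group G] {S : Subgroup G} {Ω : Type*} (B : Biset (↥S) Ω)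

theorem rOrb_mk_eq_mk_iff (P : Subgroup G) {x y : Ω} :
    (Quot.mk _ x : B.rOrb P) = Quot.mk _ y ↔ ∃ u : ↥S, (u : G) ∈ P ∧ B.rmul x u = y := by
  refine ⟨fun h => (Equivalence.eqvGen_iff ?_).mp (Quot.eqvGen_exact h), fun h => Quot.sound h⟩
  refine ⟨fun x => ⟨1, P.one_mem, B.rmul_one x⟩, ?_, ?_⟩
  · rintro x y ⟨u, hu, rfl⟩
    exact ⟨u⁻¹, P.inv_mem hu, by rw [← B.rmul_mul, mul_inv_cancel, B.rmul_one]⟩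
  · rintro x y z ⟨u, hu, rfl⟩ ⟨v, hv, rfl⟩
    exact ⟨u * v, P.mul_mem hu hv, B.rmul_mul x u v⟩

instance finite_fixedPts [Finite Ω] (P Q : Subgroup G) : Finite (B.fixedPts P Q) :=
  have : Finite (B.rOrb P) := inferInstanceAs (Finite (Quot _))
  Subtype.finite

/-- Since `Q` fixes the orbit `xP`, the stabilizer `Δ(R, c_g)` of `x` contains `(q, p⁻¹)`
for every `q ∈ Q` and some `p ∈ P`, so that `g q g⁻¹ = p⁻¹ ∈ P`. -/
theorem exists_conj_le_of_nonempty_fixedPts (hgen : B.FusionGenerated) {P Q : Subgroup G}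
    (hQ : Q ≤ S) (hfix : Nonempty (B.fixedPts P Q)) :
    ∃ g : G, Q.map (MulAut.conj g).toMonoidHom ≤ P := by
  obtain ⟨⟨⟨x⟩, hc⟩⟩ := hfix
  obtain ⟨R, g, -, -, hstab⟩ := hgen x
  refine ⟨g, ?_⟩
  rintro _ ⟨q, hq, rfl⟩
  obtain ⟨p, hp, hpx⟩ := (B.rOrb_mk_eq_mk_iff P).mp (hc ⟨q, hQ hq⟩ hq)
  have hconj := ((hstab ⟨q, hQ hq⟩ p⁻¹).mp (by rwa [inv_inv, ← B.smul_rmul])).2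
  simp only [InvMemClass.coe_inv] at hconj
  simpa [MulAut.conj_apply, ← hconj] using P.inv_mem hp

theorem nonempty_fixedPts_self (hcont : B.ContainsGroup) (P : Subgroup G) :
    Nonempty (B.fixedPts P P) := by
  obtain ⟨e, -, he⟩ := hcont
  refine ⟨⟨Quot.mk _ (e 1), fun u hu => ?_⟩⟩
  refine (B.rOrb_mk_eq_mk_iff P).mpr ⟨u⁻¹, P.inv_mem hu, ?_⟩
  rw [B.smul_rmul, ← he]
  simp

end Biset

theorem fixedPts_matrix_nonsingular_general
    {G : Type*} [Group G] [Fintype G] {S : Subgroup G} {Ω : Type*} [Finite Ω]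
    (B : Biset (↥S) Ω)
    (hgen : B.FusionGenerated)
    (hcont : B.ContainsGroup)
    {ι : Type} [Fintype ι] [DecidableEq ι] (f : ι → Subgroup G)
    (hle : ∀ i, f i ≤ S)
    (hrep : ∀ P : Subgroup G, P ≤ S →
      ∃! i, ∃ g : G, Subgroup.map (MulAut.conj g).toMonoidHom P = f i) :
    (Matrix.of fun i j : ι => (Nat.card (B.fixedPts (f j) (f i)) : ℚ)).det ≠ 0 := by
  refine Matrix.det_ne_zero_of_lt_of_ne_zero_s7 _ (fun i => Nat.card (f i)) ?_ ?_
  · intro i j hij hM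
    have hfix : Nonempty (B.fixedPts (f j) (f i)) := by
      rw [Matrix.of_apply, Nat.cast_ne_zero, Nat.card_ne_zero] at hM
      exact hM.1
    obtain ⟨g, hg⟩ := B.exists_conj_le_of_nonempty_fixedPts hgen (hle i) hfix
    have hcard := Subgroup.card_map_of_injective (K := f i)
      (f := (MulAut.conj g).toMonoidHom) (MulAut.conj g).injective
    refine (hcard ▸ Subgroup.card_le_of_le hg).lt_of_ne fun hij' => hij ?_
    have hconj := Subgroup.eq_of_le_of_card_ge hg (hcard ▸ hij'.ge)
    exact (hrep (f i) (hle i)).unique ⟨1, by ext; simp⟩ ⟨g, hconj⟩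
  · intro i
    have := B.nonempty_fixedPts_self hcont (f i)
    simpa using Nat.card_pos.ne'

/-- **Nonsingularity of the fixed-point matrix of a characteristic biset
(group-realized form).**  Let `G` be a finite group, `S ≤ G`, and let `Ω` be a finite
`(S,S)`-biset which is `F`-generated and `F`-stable for the fusion on `S` induced by
`G` and which contains the `(S,S)`-biset `S`.  Let `f i`, for `i` in a finite index
type `ι`, be a system of representatives of the `G`-conjugacy classes of subgroups
of `S`.  Then the matrix over `ℚ` whose `(Q,P)`-entry is the number of `Q`-fixed
points of the left `S`-set `Ω/P` is nonsingular. -/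
theorem fixedPts_matrix_nonsingular
    {G : Type*} [Group G] [Fintype G] {S : Subgroup G} {Ω : Type*} [Finite Ω]
    (B : Biset (↥S) Ω)
    (hgen : B.FusionGenerated) (hL : B.LeftStable) (hR : B.RightStable)
    (hcont : B.ContainsGroup)
    {ι : Type} [Fintype ι] [DecidableEq ι] (f : ι → Subgroup G)
    (hle : ∀ i, f i ≤ S)
    (hrep : ∀ P : Subgroup G, P ≤ S →
      ∃! i, ∃ g : G, Subgroup.map (MulAut.conj g).toMonoidHom P = f i) :
    (Matrix.of fun i j : ι => (Nat.card (B.fixedPts (f j) (f i)) : ℚ)).det ≠ 0 :=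
  fixedPts_matrix_nonsingular_general B hgen hcont f hle hrep
end
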